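/- Let u : ℝ × ℝ → ℝ be a smooth function of (x,t) with u_xxx(x,t) ≠ 0 for all (x,t), satisfying the evolution equation u_t = u_xx⁶/u_xxx². Define p : ℝ × ℝ → ℝ by p = −2^{1/3}·u_xx. Then p_x(x,t) ≠ 0 for all (x,t), and p satisfies ∂p/∂t = ∂/∂x ( p⁶·p_xx/p_x³ − 3·p⁵/p_x ) at every point (x,t), i.e. the potential variable v with v_x = p solves v_t = v_x⁶ v_xxx/v_xx³ − 3 v_x⁵/v_xx. -/

import Mathlib

/-- Partial derivative with respect to the first (space) variable. -/
noncomputable def pdx (f : ℝ × ℝ → ℝ) : ℝ × ℝ → ℝ :=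
  fun p => deriv (fun x => f (x, p.2)) p.1

/-- Partial derivative with respect to the second (time) variable. -/
noncomputable def pdt (f : ℝ × ℝ → ℝ) : ℝ × ℝ → ℝ :=
  fun p => deriv (fun t => f (p.1, t)) p.2

/-! With `k = -2^{1/3}` we have `p = k u_xx`. Writing `a, b, c` for `u_xx, u_xxx, u_xxxx`, the flux is
`G = k⁴ (a⁶ c / b³ - 3 a⁵ / b)`, and since `k³ = -2` this is `k D_x (a⁶ / b²) = k D_x u_t`. Hence
`D_x G = k D_x² u_t = k D_t u_xx = p_t` by the symmetry of mixed partial derivatives. -/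

open scoped ContDiff

section PartialDerivatives

variable {f : ℝ × ℝ → ℝ}

theorem pdx_const_mul (k : ℝ) : pdx (fun q => k * f q) = fun q => k * pdx f q :=
  funext fun _ => deriv_const_mul_field k

theorem pdt_const_mul (k : ℝ) : pdt (fun q => k * f q) = fun q => k * pdt f q :=
  funext fun _ => deriv_const_mul_field k

theorem hasDerivAt_pdx_fderiv {q : ℝ × ℝ} (hf : DifferentiableAt ℝ f q) :
    HasDerivAt (fun x => f (x, q.2)) (fderiv ℝ f q (1, 0)) q.1 :=
  hf.hasFDerivAt.comp_hasDerivAt q.1 ((hasDerivAt_id q.1).prodMk (hasDerivAt_const q.1 q.2))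

theorem hasDerivAt_pdt_fderiv {q : ℝ × ℝ} (hf : DifferentiableAt ℝ f q) :
    HasDerivAt (fun t => f (q.1, t)) (fderiv ℝ f q (0, 1)) q.2 :=
  hf.hasFDerivAt.comp_hasDerivAt q.2 ((hasDerivAt_const q.2 q.1).prodMk (hasDerivAt_id q.2))

theorem pdx_eq_fderiv {q : ℝ × ℝ} (hf : DifferentiableAt ℝ f q) :
    pdx f q = fderiv ℝ f q (1, 0) :=
  (hasDerivAt_pdx_fderiv hf).deriv

theorem pdt_eq_fderiv {q : ℝ × ℝ} (hf : DifferentiableAt ℝ f q) :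
    pdt f q = fderiv ℝ f q (0, 1) :=
  (hasDerivAt_pdt_fderiv hf).deriv

theorem pdx_eq_fun_fderiv (hf : Differentiable ℝ f) : pdx f = fun q => fderiv ℝ f q (1, 0) :=
  funext fun q => pdx_eq_fderiv (hf q)

theorem pdt_eq_fun_fderiv (hf : Differentiable ℝ f) : pdt f = fun q => fderiv ℝ f q (0, 1) :=
  funext fun q => pdt_eq_fderiv (hf q)

theorem hasDerivAt_pdx {q : ℝ × ℝ} (hf : DifferentiableAt ℝ f q) :
    HasDerivAt (fun x => f (x, q.2)) (pdx f q) q.1 :=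
  pdx_eq_fderiv hf ▸ hasDerivAt_pdx_fderiv hf

theorem contDiff_pdx (hf : ContDiff ℝ ∞ f) : ContDiff ℝ ∞ (pdx f) := by
  rw [pdx_eq_fun_fderiv (hf.differentiable (by simp))]
  exact (hf.fderiv_right le_rfl).clm_apply contDiff_const

theorem fderiv_fderiv_apply {q : ℝ × ℝ} (hf : ContDiff ℝ 2 f) (v w : ℝ × ℝ) :
    fderiv ℝ (fun r => fderiv ℝ f r v) q w = fderiv ℝ (fderiv ℝ f) q w v := by
  have hdf : DifferentiableAt ℝ (fderiv ℝ f) q :=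
    (hf.fderiv_right (m := 1) le_rfl).differentiable one_ne_zero q
  rw [fderiv_clm_apply hdf (differentiableAt_const v)]
  simp

theorem pdt_pdx_comm (hf : ContDiff ℝ 2 f) : pdt (pdx f) = pdx (pdt f) := by
  have hd : Differentiable ℝ f := hf.differentiable (by norm_num)
  have hd' : Differentiable ℝ (fderiv ℝ f) :=
    (hf.fderiv_right (m := 1) le_rfl).differentiable one_ne_zero
  funext q
  rw [pdx_eq_fun_fderiv hd, pdt_eq_fun_fderiv hd,
    pdt_eq_fderiv ((hd' q).clm_apply (differentiableAt_const _)),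
    pdx_eq_fderiv ((hd' q).clm_apply (differentiableAt_const _)),
    fderiv_fderiv_apply hf, fderiv_fderiv_apply hf]
  exact (hf.contDiffAt.isSymmSndFDerivAt (by simp)) _ _

end PartialDerivatives

theorem pdx_pow_six_div_pow_two {a b : ℝ × ℝ → ℝ} {q : ℝ × ℝ} (ha : DifferentiableAt ℝ a q)
    (hb : DifferentiableAt ℝ b q) (hb0 : b q ≠ 0) :
    pdx (fun r => a r ^ 6 / b r ^ 2) q =
      6 * a q ^ 5 * pdx a q / b q ^ 2 - 2 * a q ^ 6 * pdx b q / b q ^ 3 := by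
  rw [pdx, (((hasDerivAt_pdx ha).fun_pow 6).fun_div ((hasDerivAt_pdx hb).fun_pow 2)
    (pow_ne_zero 2 hb0)).deriv]
  field_simp
  ring

theorem neg_two_rpow_one_div_three_pow_three : (-(2 : ℝ) ^ ((1 : ℝ) / 3)) ^ 3 = -2 := by
  have h : ((2 : ℝ) ^ ((1 : ℝ) / 3)) ^ 3 = 2 := by
    simpa [one_div] using Real.rpow_inv_natCast_pow (x := 2) zero_le_two (n := 3) three_ne_zero
  rw [neg_pow, h]
  norm_num

theorem potential_flux_eq {k a b c : ℝ} (hk : k ^ 3 = -2) (hb : b ≠ 0) :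
    (k * a) ^ 6 * (k * c) / (k * b) ^ 3 - 3 * (k * a) ^ 5 / (k * b) =
      k * (6 * a ^ 5 * b / b ^ 2 - 2 * a ^ 6 * c / b ^ 3) := by
  have hk0 : k ≠ 0 := by rintro rfl; norm_num at hk
  field_simp
  linear_combination a ^ 5 * (a * c - 3 * b ^ 2) * hk

/-- Potentialisation of Subcase 1.2: for a solution of `u_t = u_xx⁶/u_xxx²`, the
variable `p = −2^{1/3} u_xx` has `p_x ≠ 0` and satisfies the compatibility identity
`p_t = D_x( p⁶ p_xx/p_x³ − 3 p⁵/p_x )`, i.e. the potential `v` with `v_x = p`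
solves `v_t = v_x⁶ v_xxx/v_xx³ − 3 v_x⁵/v_xx`. -/
theorem potentialisation_subcase12
    (u : ℝ × ℝ → ℝ) (hu : ContDiff ℝ (⊤ : ℕ∞) u)
    (huxxx : ∀ q : ℝ × ℝ, pdx (pdx (pdx u)) q ≠ 0)
    (heq : ∀ q : ℝ × ℝ, pdt u q = (pdx (pdx u) q) ^ 6 / (pdx (pdx (pdx u)) q) ^ 2)
    (p : ℝ × ℝ → ℝ)
    (hp : p = fun q => -(2 : ℝ) ^ ((1 : ℝ) / 3) * pdx (pdx u) q)
    (G : ℝ × ℝ → ℝ)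
    (hG : G = fun q =>
      (p q) ^ 6 * pdx (pdx p) q / (pdx p q) ^ 3 - 3 * (p q) ^ 5 / pdx p q) :
    (∀ q : ℝ × ℝ, pdx p q ≠ 0) ∧ (∀ q : ℝ × ℝ, pdt p q = pdx G q) := by
  set k : ℝ := -(2 : ℝ) ^ ((1 : ℝ) / 3)
  have hk : k ^ 3 = -2 := neg_two_rpow_one_div_three_pow_three
  have hd {f : ℝ × ℝ → ℝ} (hf : ContDiff ℝ ∞ f) : Differentiable ℝ f := hf.differentiable (by simp)
  have hC2 {f : ℝ × ℝ → ℝ} (hf : ContDiff ℝ ∞ f) : ContDiff ℝ 2 f :=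
    hf.of_le (WithTop.coe_le_coe.mpr le_top)
  have huxx : ContDiff ℝ ∞ (pdx (pdx u)) := contDiff_pdx (contDiff_pdx hu)
  have hpx : pdx p = fun q => k * pdx (pdx (pdx u)) q := by rw [hp, pdx_const_mul]
  have hflux : G = fun q => k * pdx (pdt u) q := by
    rw [hG, hpx, pdx_const_mul, hp, funext heq]
    funext q
    rw [pdx_pow_six_div_pow_two (hd huxx q) (hd (contDiff_pdx huxx) q) (huxxx q)]
    exact potential_flux_eq hk (huxxx q)
  refine ⟨fun q => ?_, fun q => ?_⟩
  · rw [hpx]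
    exact mul_ne_zero (neg_ne_zero.mpr (by positivity)) (huxxx q)
  · rw [hflux, hp, pdt_const_mul, pdx_const_mul, pdt_pdx_comm (hC2 (contDiff_pdx hu)),
      pdt_pdx_comm (hC2 hu)]
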